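/- If b ⊆ a then levof(b) ⊆ levof(a), and if b ∈ a then levof(b) ∈ levof(a). -/

import Mathlib

def pot (a : ZFSet) : ZFSet :=
  ZFSet.sep (fun x => ∃ c ∈ a, x ⊆ c) (ZFSet.powerset (ZFSet.sUnion a))

def Potent (a : ZFSet) : Prop := ∀ x, (∃ c, x ⊆ c ∧ c ∈ a) → x ∈ a

def IsHistory (h : ZFSet) : Prop := ∀ x ∈ h, x = pot (x ∩ h)

def IsLevel (s : ZFSet) : Prop := ∃ h, IsHistory h ∧ s = pot h

noncomputable def levof (a : ZFSet) : ZFSet :=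
  Classical.epsilon (fun s => IsLevel s ∧ a ⊆ s ∧ ∀ t, IsLevel t → a ⊆ t → t ∉ s)

/-!
Levels are transitive and potent, and any two are comparable: `s ∈ t` or `t ⊆ s`
(by a double `∈`-induction). Since every set lies in some level, `levof a` is the
`⊆`-least level containing `a`. Hence `b ⊆ a ⊆ levof a` gives `levof b ⊆ levof a`; and if
`b ∈ a`, then `b ⊆ c` for a level `c ∈ levof a`, so `levof b ⊆ c` and potency of
`levof a` gives `levof b ∈ levof a`.
-/

theorem mem_pot {a x : ZFSet} : x ∈ pot a ↔ ∃ c ∈ a, x ⊆ c := by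
  refine ⟨fun hx => (ZFSet.mem_sep.mp hx).2,
    fun ⟨c, hc, hxc⟩ => ZFSet.mem_sep.mpr ⟨?_, c, hc, hxc⟩⟩
  exact ZFSet.mem_powerset.mpr fun z hz => ZFSet.mem_sUnion.mpr ⟨c, hc, hxc hz⟩

theorem subset_pot (a : ZFSet) : a ⊆ pot a := fun x hx => mem_pot.mpr ⟨x, hx, subset_rfl⟩

theorem potent_pot (a : ZFSet) : Potent (pot a) := by
  rintro x ⟨c, hxc, hc⟩
  obtain ⟨d, hd, hcd⟩ := mem_pot.mp hc
  exact mem_pot.mpr ⟨d, hd, hxc.trans hcd⟩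

theorem isTransitive_pot {a : ZFSet} (ha : ∀ c ∈ a, c.IsTransitive) : (pot a).IsTransitive := by
  intro x hx y hy
  obtain ⟨c, hc, hxc⟩ := mem_pot.mp hx
  exact mem_pot.mpr ⟨c, hc, (ha c hc).subset_of_mem (hxc hy)⟩

namespace IsHistory

variable {h : ZFSet}

theorem subset_of_mem (hh : IsHistory h) {x y : ZFSet} (hx : x ∈ h) (hy : y ∈ h)
    (hyx : y ∈ x) :
    y ⊆ x := by
  induction x using ZFSet.inductionOn generalizing y with
  | _ x ih =>
    intro z hzy
    obtain ⟨c, hc, hyc⟩ := mem_pot.mp (hh x hx ▸ hyx)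
    obtain ⟨hcx, hch⟩ := ZFSet.mem_inter.mp hc
    obtain ⟨w, hw, hzw⟩ := mem_pot.mp (hh y hy ▸ hzy)
    obtain ⟨hwy, hwh⟩ := ZFSet.mem_inter.mp hw
    have hwc : w ⊆ c := ih c hcx hch hwh (hyc hwy)
    exact hh x hx ▸ mem_pot.mpr ⟨c, hc, hzw.trans hwc⟩

theorem isLevel_of_mem (hh : IsHistory h) {x : ZFSet} (hx : x ∈ h) : IsLevel x := by
  refine ⟨x ∩ h, fun y hy => ?_, hh x hx⟩
  obtain ⟨hyx, hyh⟩ := ZFSet.mem_inter.mp hy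
  have hyx_sub : y ⊆ x := hh.subset_of_mem hx hyh hyx
  have : y ∩ (x ∩ h) = y ∩ h := by
    ext z
    simp only [ZFSet.mem_inter]
    exact ⟨fun ⟨hzy, _, hzh⟩ => ⟨hzy, hzh⟩,
      fun ⟨hzy, hzh⟩ => ⟨hzy, hyx_sub hzy, hzh⟩⟩
  rw [this]
  exact hh y hyh

end IsHistory

namespace IsLevel

variable {s t : ZFSet}

theorem isTransitive (hs : IsLevel s) : s.IsTransitive := by
  obtain ⟨h, hh, rfl⟩ := hs
  intro x hx z hz
  obtain ⟨c, hch, hxc⟩ := mem_pot.mp hx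
  obtain ⟨w, hw, hzw⟩ := mem_pot.mp (hh c hch ▸ hxc hz)
  exact mem_pot.mpr ⟨w, (ZFSet.mem_inter.mp hw).2, hzw⟩

theorem potent (hs : IsLevel s) : Potent s := by
  obtain ⟨h, -, rfl⟩ := hs
  exact potent_pot h

theorem mem_of_subset_of_mem (hs : IsLevel s) {x c : ZFSet} (hxc : x ⊆ c) (hc : c ∈ s) :
    x ∈ s :=
  hs.potent x ⟨c, hxc, hc⟩

theorem exists_isLevel_mem_of_mem (hs : IsLevel s) {x : ZFSet} (hx : x ∈ s) :
    ∃ c, IsLevel c ∧ c ∈ s ∧ x ⊆ c := by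
  obtain ⟨h, hh, rfl⟩ := hs
  obtain ⟨c, hch, hxc⟩ := mem_pot.mp hx
  exact ⟨c, hh.isLevel_of_mem hch, subset_pot h hch, hxc⟩

theorem mem_of_ssubset {d : ZFSet} (hs : IsLevel s) (hd : IsLevel d)
    (ih : ∀ c ∈ s, IsLevel c → c ∈ d ∨ d ⊆ c) (hds : d ⊆ s) (hne : d ≠ s) :
    d ∈ s := by
  obtain ⟨y, hys, hyd⟩ : ∃ y ∈ s, y ∉ d := by
    by_contra! hsd
    exact hne (ZFSet.ext fun z => ⟨fun hz => hds hz, hsd z⟩)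
  obtain ⟨c, hc, hcs, hyc⟩ := hs.exists_isLevel_mem_of_mem hys
  rcases ih c hcs hc with hcd | hdc
  · exact absurd (hd.mem_of_subset_of_mem hyc hcd) hyd
  · exact hs.mem_of_subset_of_mem hdc hcs

theorem mem_or_subset (hs : IsLevel s) (ht : IsLevel t) : s ∈ t ∨ t ⊆ s := by
  induction s using ZFSet.inductionOn generalizing t with
  | _ s ihs =>
    induction t using ZFSet.inductionOn with
    | _ t iht =>
      refine or_iff_not_imp_left.mpr fun hst x hxt => ?_
      obtain ⟨d, hd, hdt, hxd⟩ := ht.exists_isLevel_mem_of_mem hxt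
      have hds : d ⊆ s := (iht d hdt hd).resolve_left fun hsd => hst (ht.isTransitive d hdt hsd)
      have hne : d ≠ s := by
        rintro rfl
        exact hst hdt
      exact hs.mem_of_subset_of_mem hxd
        (hs.mem_of_ssubset hd (fun c hcs hc => ihs c hcs hc hd) hds hne)

end IsLevel

noncomputable def levelsIn (x : ZFSet) : ZFSet := ZFSet.sep IsLevel x

theorem mem_levelsIn {x t : ZFSet} : t ∈ levelsIn x ↔ t ∈ x ∧ IsLevel t := ZFSet.mem_sep

theorem IsLevel.eq_pot_levelsIn {s : ZFSet} (hs : IsLevel s) : s = pot (levelsIn s) := by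
  ext z
  constructor
  · intro hz
    obtain ⟨c, hc, hcs, hzc⟩ := hs.exists_isLevel_mem_of_mem hz
    exact mem_pot.mpr ⟨c, mem_levelsIn.mpr ⟨hcs, hc⟩, hzc⟩
  · intro hz
    obtain ⟨c, hc, hzc⟩ := mem_pot.mp hz
    exact hs.mem_of_subset_of_mem hzc (mem_levelsIn.mp hc).1

theorem isHistory_levelsIn {x : ZFSet} (hx : x.IsTransitive) : IsHistory (levelsIn x) := by
  intro t ht
  obtain ⟨htx, htl⟩ := mem_levelsIn.mp ht
  have : t ∩ levelsIn x = levelsIn t := by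
    ext u
    simp only [ZFSet.mem_inter, mem_levelsIn]
    exact ⟨fun ⟨hut, _, hul⟩ => ⟨hut, hul⟩,
      fun ⟨hut, hul⟩ => ⟨hut, hx.subset_of_mem htx hut, hul⟩⟩
  rw [this]
  exact htl.eq_pot_levelsIn

theorem levof_spec_of_exists {a : ZFSet} (ha : ∃ s, IsLevel s ∧ a ⊆ s) :
    IsLevel (levof a) ∧ a ⊆ levof a ∧ ∀ t, IsLevel t → a ⊆ t → t ∉ levof a := by
  have hmin : ∃ s, IsLevel s ∧ a ⊆ s ∧ ∀ t, IsLevel t → a ⊆ t → t ∉ s := by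
    obtain ⟨s, ⟨hs, has⟩, hleast⟩ := ZFSet.mem_wf.has_min {s | IsLevel s ∧ a ⊆ s} ha
    exact ⟨s, hs, has, fun t ht hat => hleast t ⟨ht, hat⟩⟩
  exact Classical.epsilon_spec hmin

/-- The levels `levof x` for `x ∈ a` are collected into a transitive set, whose levels form a
history; its `pot` is a level containing every `x ∈ a`. -/
theorem exists_isLevel_subset (a : ZFSet) : ∃ s, IsLevel s ∧ a ⊆ s := by
  induction a using ZFSet.inductionOn with
  | _ a ih =>
    have hspec (x : a) := levof_spec_of_exists (ih x x.2)
    let X := pot (ZFSet.range fun x : a => levof x)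
    have hX : X.IsTransitive := isTransitive_pot fun c hc => by
      obtain ⟨x, rfl⟩ := ZFSet.mem_range.mp hc
      exact (hspec x).1.isTransitive
    refine ⟨pot (levelsIn X), ⟨_, isHistory_levelsIn hX, rfl⟩, fun x hx => ?_⟩
    have hlev : levof x ∈ X := subset_pot _ (ZFSet.mem_range_self (⟨x, hx⟩ : a))
    obtain ⟨hx_lev, hx_sub, -⟩ := hspec ⟨x, hx⟩
    exact mem_pot.mpr ⟨levof x, mem_levelsIn.mpr ⟨hlev, hx_lev⟩, hx_sub⟩

theorem levof_spec (a : ZFSet) :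
    IsLevel (levof a) ∧ a ⊆ levof a ∧ ∀ t, IsLevel t → a ⊆ t → t ∉ levof a :=
  levof_spec_of_exists (exists_isLevel_subset a)

theorem levof_subset {a t : ZFSet} (ht : IsLevel t) (hat : a ⊆ t) : levof a ⊆ t :=
  (ht.mem_or_subset (levof_spec a).1).resolve_left ((levof_spec a).2.2 t ht hat)

theorem levof_mono {a b : ZFSet} (hba : b ⊆ a) : levof b ⊆ levof a :=
  levof_subset (levof_spec a).1 (hba.trans (levof_spec a).2.1)

theorem levof_mem_levof {a b : ZFSet} (hba : b ∈ a) : levof b ∈ levof a := by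
  obtain ⟨hla, hsa, -⟩ := levof_spec a
  obtain ⟨c, hc, hca, hbc⟩ := hla.exists_isLevel_mem_of_mem (hsa hba)
  exact hla.mem_of_subset_of_mem (levof_subset hc hbc) hca

theorem stmt11 (a b : ZFSet) :
    (b ⊆ a → levof b ⊆ levof a) ∧ (b ∈ a → levof b ∈ levof a) :=
  ⟨levof_mono, levof_mem_levof⟩
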